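/- Let P be a polygonal curve in ℝ^d, let λ ≥ 0, Δ ≥ 0 and s ∈ [0,1]. Then there exists a point p* ∈ ℝ^d such that L_{λ,Δ}(P,s) is contained in the closed ball of radius 5Δ centered at p*. -/

import Mathlib

open Set Metric Function

noncomputable section

/-- Euclidean space ℝ^d. -/
abbrev Euc (d : ℕ) := EuclideanSpace ℝ (Fin d)

/-- The polygonal curve (parametrized over `[0,1]`) obtained by concatenating the
segments between consecutive vertices `p 0, p 1, …, p n`. -/
def curveMap {d n : ℕ} (p : Fin (n + 1) → Euc d) (t : ℝ) : Euc d :=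
  if h : n = 0 then p 0
  else
    (1 - (t * n - (min ⌊t * (n : ℝ)⌋₊ (n - 1) : ℕ))) • p ⟨min ⌊t * (n : ℝ)⌋₊ (n - 1), by omega⟩
      + (t * n - (min ⌊t * (n : ℝ)⌋₊ (n - 1) : ℕ)) • p ⟨min ⌊t * (n : ℝ)⌋₊ (n - 1) + 1, by omega⟩

/-- A reparametrization: a continuous non-decreasing surjection of `[0,1]` onto itself. -/
def IsRepar (f : ℝ → ℝ) : Prop :=
  ContinuousOn f (Icc 0 1) ∧ MonotoneOn f (Icc 0 1) ∧ f '' Icc 0 1 = Icc 0 1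

/-- The (continuous) Fréchet distance between two curves `[0,1] → ℝ^d`. -/
def frechetDist {d : ℕ} (P Q : ℝ → Euc d) : ℝ :=
  sInf { r : ℝ | ∃ f g : ℝ → ℝ, IsRepar f ∧ IsRepar g ∧
    ∀ t ∈ Icc (0 : ℝ) 1, dist (P (f t)) (Q (g t)) ≤ r }

/-- The edge (segment curve) from `a` to `b`, parametrized over `[0,1]`. -/
def seg {d : ℕ} (a b : Euc d) (t : ℝ) : Euc d := (1 - t) • a + t • b

/-- The subcurve `P[s,t]` of `P`, reparametrized over `[0,1]`. -/
def subcurve {d : ℕ} (P : ℝ → Euc d) (s t : ℝ) (u : ℝ) : Euc d := P (s + u * (t - s))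

/-- All edge lengths of the polygonal curve with vertices `p` are at most `Λ`. -/
def EdgeLenLe {d n : ℕ} (p : Fin (n + 1) → Euc d) (Λ : ℝ) : Prop :=
  ∀ i : Fin n, dist (p i.castSucc) (p i.succ) ≤ Λ

/-- The vertices `p` define a `(μ,ε)`-curve: each edge length is a non-negative integer
multiple of `ε` and is at most `μ·ε`. -/
def IsMuEpsEdges {d n : ℕ} (p : Fin (n + 1) → Euc d) (μ : ℕ) (ε : ℝ) : Prop :=
  ∀ i : Fin n, (∃ m : ℕ, dist (p i.castSucc) (p i.succ) = m * ε) ∧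
    dist (p i.castSucc) (p i.succ) ≤ μ * ε

/-- The `Δ`-neighbourhood of a set `A ⊆ ℝ^d`. -/
def nbhd {d : ℕ} (A : Set (Euc d)) (Δ : ℝ) : Set (Euc d) :=
  { x | ∃ a ∈ A, dist x a ≤ Δ }

/-- The locus `L_{λ,Δ}(P,s)` of endpoints of edges of length `λ` that are within Fréchet
distance `Δ` of some subcurve of `P` starting at parameter `s`. -/
def locusStart {d n : ℕ} (P : Fin (n + 1) → Euc d) (lam Δ s : ℝ) : Set (Euc d) :=
  { q | ∃ p : Euc d, ∃ t ∈ Icc s 1, dist p q = lam ∧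
      frechetDist (subcurve (curveMap P) s t) (seg p q) ≤ Δ }

/-- The locus `𝓛_{λ,Δ}(P,p)` of endpoints of edges of length `λ` starting at `p` that are
within Fréchet distance `Δ` of some subcurve of `P`. -/
def locusPoint {d n : ℕ} (P : Fin (n + 1) → Euc d) (lam Δ : ℝ) (p : Euc d) : Set (Euc d) :=
  { q | dist p q = lam ∧ ∃ s t : ℝ, 0 ≤ s ∧ s ≤ t ∧ t ≤ 1 ∧
      frechetDist (subcurve (curveMap P) s t) (seg p q) ≤ Δ }

/-!
Call an edge `pq` admissible if `|pq| = λ` and `d_F(P[s,t], pq) ≤ Δ` for some `t ≥ s`; then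
`|p P(s)| ≤ Δ`, `|q P(t)| ≤ Δ`, and every point of `P[s,t]` is `Δ`-close to `pq`. If `λ ≤ 4Δ`,
all admissible `q` lie within `λ + Δ` of `P(s)`. Otherwise, given `η > 0`, pick an admissible
`p₀q₀` for a `t₀` so close to the supremum of the admissible `t` that `P` moves by at most `η`
on later admissible parameters, and let `c` be the point of `p₀q₀` at distance `2Δ` from `q₀`.
An admissible `q` with `t ≤ t₀` is `2Δ`-close to a point `x` of `p₀q₀`; since `|p₀q| ≥ λ - 2Δ`,
`x` lies on the last `4Δ` of `p₀q₀`, so `|qc| ≤ 4Δ`. If `t > t₀`, then `|qc| ≤ Δ + η + Δ + 2Δ`.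
Taking `η = Δ` proves the claim for `Δ > 0`; for `Δ = 0` the locus has diameter zero.
-/

section Repar

variable {f : ℝ → ℝ}

lemma isRepar_id : IsRepar id :=
  ⟨continuousOn_id, monotoneOn_id, image_id _⟩

lemma IsRepar.mapsTo (hf : IsRepar f) : MapsTo f (Icc 0 1) (Icc 0 1) :=
  fun _ hx => hf.2.2 ▸ mem_image_of_mem f hx

lemma IsRepar.map_zero (hf : IsRepar f) : f 0 = 0 := by
  have h0 : (0 : ℝ) ∈ Icc (0 : ℝ) 1 := left_mem_Icc.2 zero_le_one
  obtain ⟨x, hx, hfx⟩ : (0 : ℝ) ∈ f '' Icc 0 1 := hf.2.2.symm ▸ h0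
  exact le_antisymm ((hf.2.1 h0 hx hx.1).trans_eq hfx) (hf.mapsTo h0).1

lemma IsRepar.map_one (hf : IsRepar f) : f 1 = 1 := by
  have h1 : (1 : ℝ) ∈ Icc (0 : ℝ) 1 := right_mem_Icc.2 zero_le_one
  obtain ⟨x, hx, hfx⟩ : (1 : ℝ) ∈ f '' Icc 0 1 := hf.2.2.symm ▸ h1
  exact le_antisymm (hf.mapsTo h1).2 (hfx.symm.trans_le (hf.2.1 hx h1 hx.2))

end Repar

section FrechetDist

variable {d : ℕ} {X Y : ℝ → Euc d}

lemma le_frechetDist (hX : ContinuousOn X (Icc 0 1)) (hY : ContinuousOn Y (Icc 0 1)) {r : ℝ}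
    (h : ∀ f g, IsRepar f → IsRepar g → ∃ u ∈ Icc (0 : ℝ) 1, r ≤ dist (X (f u)) (Y (g u))) :
    r ≤ frechetDist X Y := by
  obtain ⟨C, hC⟩ := isCompact_Icc.bddAbove_image
    (by fun_prop : ContinuousOn (fun u => dist (X u) (Y u)) (Icc 0 1))
  refine le_csInf ⟨C, id, id, isRepar_id, isRepar_id, fun u hu => hC ⟨u, hu, rfl⟩⟩ ?_
  rintro r' ⟨f, g, hf, hg, hfg⟩
  obtain ⟨u, hu, hr⟩ := h f g hf hg
  exact hr.trans (hfg u hu)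

lemma dist_zero_le_frechetDist (hX : ContinuousOn X (Icc 0 1))
    (hY : ContinuousOn Y (Icc 0 1)) : dist (X 0) (Y 0) ≤ frechetDist X Y :=
  le_frechetDist hX hY fun _ _ hf hg =>
    ⟨0, left_mem_Icc.2 zero_le_one, by rw [hf.map_zero, hg.map_zero]⟩

lemma dist_one_le_frechetDist (hX : ContinuousOn X (Icc 0 1))
    (hY : ContinuousOn Y (Icc 0 1)) : dist (X 1) (Y 1) ≤ frechetDist X Y :=
  le_frechetDist hX hY fun _ _ hf hg =>
    ⟨1, right_mem_Icc.2 zero_le_one, by rw [hf.map_one, hg.map_one]⟩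

lemma exists_dist_le_frechetDist (hX : ContinuousOn X (Icc 0 1))
    (hY : ContinuousOn Y (Icc 0 1)) {u : ℝ} (hu : u ∈ Icc (0 : ℝ) 1) :
    ∃ v ∈ Icc (0 : ℝ) 1, dist (X u) (Y v) ≤ frechetDist X Y := by
  obtain ⟨v, hv, hmin⟩ := isCompact_Icc.exists_isMinOn (nonempty_Icc.2 zero_le_one)
    (by fun_prop : ContinuousOn (fun w => dist (X u) (Y w)) (Icc 0 1))
  refine ⟨v, hv, le_frechetDist hX hY fun f g hf hg => ?_⟩
  obtain ⟨w, hw, rfl⟩ : u ∈ f '' Icc 0 1 := hf.2.2.symm ▸ hu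
  exact ⟨w, hw, hmin (hg.mapsTo hw)⟩

end FrechetDist

section Segment

variable {d : ℕ} (p q : Euc d)

@[simp] lemma seg_zero : seg p q 0 = p := by simp [seg]

@[simp] lemma seg_one : seg p q 1 = q := by simp [seg]

lemma continuous_seg : Continuous (seg p q) := by
  unfold seg; fun_prop

lemma dist_seg_seg (v w : ℝ) : dist (seg p q v) (seg p q w) = |v - w| * dist p q := by
  have : seg p q v - seg p q w = (v - w) • (q - p) := by simp only [seg]; module
  rw [dist_eq_norm, this, norm_smul, Real.norm_eq_abs, ← dist_eq_norm, dist_comm]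

end Segment

/-- The consequences of `d_F(γ[s,t], pq) ≤ Δ` that the argument uses. -/
structure IsNearEdge {d : ℕ} (γ : ℝ → Euc d) (s t Δ : ℝ) (p q : Euc d) : Prop where
  dist_start : dist (γ s) p ≤ Δ
  dist_end : dist (γ t) q ≤ Δ
  exists_near : ∀ t' ∈ Icc s t, ∃ v ∈ Icc (0 : ℝ) 1, dist (γ t') (seg p q v) ≤ Δ

def nearEdgeEnds {d : ℕ} (γ : ℝ → Euc d) (lam Δ s : ℝ) : Set (Euc d) :=
  { q | ∃ p, ∃ t ∈ Icc s 1, dist p q = lam ∧ IsNearEdge γ s t Δ p q }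

section NearEdge

variable {d : ℕ} {γ : ℝ → Euc d}

lemma isNearEdge_of_frechetDist_le {s t Δ : ℝ} {p q : Euc d} (hγ : ContinuousOn γ (Icc s t))
    (hst : s ≤ t) (hF : frechetDist (subcurve γ s t) (seg p q) ≤ Δ) :
    IsNearEdge γ s t Δ p q := by
  have hmaps : MapsTo (fun u : ℝ => s + u * (t - s)) (Icc 0 1) (Icc s t) := fun u hu =>
    ⟨le_add_of_nonneg_right (mul_nonneg hu.1 (sub_nonneg.2 hst)),
      by nlinarith [mul_le_of_le_one_left (sub_nonneg.2 hst) hu.2]⟩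
  have hX : ContinuousOn (subcurve γ s t) (Icc 0 1) :=
    hγ.comp (by fun_prop : Continuous fun u : ℝ => s + u * (t - s)).continuousOn hmaps
  have hY : ContinuousOn (seg p q) (Icc 0 1) := (continuous_seg p q).continuousOn
  refine ⟨?_, ?_, fun t' ht' => ?_⟩
  · simpa [subcurve] using (dist_zero_le_frechetDist hX hY).trans hF
  · simpa [subcurve] using (dist_one_le_frechetDist hX hY).trans hF
  · obtain ⟨u, hu, rfl⟩ := intermediate_value_Icc zero_le_one
      (by fun_prop : Continuous fun u : ℝ => s + u * (t - s)).continuousOn (by simpa using ht')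
    obtain ⟨v, hv, hdist⟩ := exists_dist_le_frechetDist hX hY hu
    exact ⟨v, hv, hdist.trans hF⟩

lemma nearEdgeEnds_subset_closedBall_start (lam Δ s : ℝ) :
    nearEdgeEnds γ lam Δ s ⊆ closedBall (γ s) (lam + Δ) := by
  rintro q ⟨p, t, -, hpq, hnear⟩
  rw [mem_closedBall, dist_comm]
  linarith [dist_triangle (γ s) p q, hnear.dist_start]

end NearEdge

lemma dist_seg_le_four_mul {d : ℕ} {p q p₀ q₀ o : Euc d} {lam Δ v : ℝ} (hlam : 0 < lam)
    (hpq : dist p q = lam) (hpq₀ : dist p₀ q₀ = lam) (hp : dist o p ≤ Δ) (hp₀ : dist o p₀ ≤ Δ)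
    (hv : v ∈ Icc (0 : ℝ) 1) (hq : dist q (seg p₀ q₀ v) ≤ 2 * Δ) :
    dist q (seg p₀ q₀ (1 - 2 * Δ / lam)) ≤ 4 * Δ := by
  set x := seg p₀ q₀ v
  have hp₀x : dist p₀ x = v * lam := by
    have h := dist_seg_seg p₀ q₀ 0 v
    rwa [seg_zero, zero_sub, abs_neg, abs_of_nonneg hv.1, hpq₀] at h
  have hfar : lam - 4 * Δ ≤ v * lam := by
    linarith [dist_triangle4 p o p₀ q, dist_triangle p₀ x q, dist_comm o p, dist_comm x q]
  have hvlam : v * lam ≤ lam := mul_le_of_le_one_left hlam.le hv.2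
  have hxc : dist x (seg p₀ q₀ (1 - 2 * Δ / lam)) ≤ 2 * Δ := by
    have hcoord : (v - (1 - 2 * Δ / lam)) * lam = v * lam - lam + 2 * Δ := by
      field_simp; ring
    rw [dist_seg_seg, hpq₀, ← abs_of_pos hlam, ← abs_mul, abs_of_pos hlam, hcoord]
    exact abs_le.2 ⟨by linarith, by linarith⟩
  linarith [dist_triangle q x (seg p₀ q₀ (1 - 2 * Δ / lam))]

lemma exists_mem_forall_ge_dist_le {α : Type*} [PseudoMetricSpace α] {γ : ℝ → α} {S T : Set ℝ}
    (hne : T.Nonempty) (hbdd : BddAbove T) (hTS : T ⊆ S) (hγ : ContinuousWithinAt γ S (sSup T))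
    {ε : ℝ} (hε : 0 < ε) : ∃ t₀ ∈ T, ∀ t ∈ T, t₀ ≤ t → dist (γ t) (γ t₀) ≤ ε := by
  obtain ⟨δ, hδ, hnear⟩ := Metric.continuousWithinAt_iff.1 hγ (ε / 2) (half_pos hε)
  obtain ⟨t₀, ht₀, hlt⟩ := exists_lt_of_lt_csSup hne (sub_lt_self (sSup T) hδ)
  have htail : ∀ t ∈ T, t₀ ≤ t → dist (γ t) (γ (sSup T)) < ε / 2 := fun t ht hle =>
    hnear (hTS ht) (by
      rw [Real.dist_eq, abs_sub_lt_iff]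
      constructor <;> linarith [le_csSup hbdd ht])
  exact ⟨t₀, ht₀, fun t ht hle =>
    (dist_triangle_right _ _ _).trans (by linarith [htail t ht hle, htail t₀ ht₀ le_rfl])⟩

lemma exists_nearEdgeEnds_subset_closedBall {d : ℕ} {γ : ℝ → Euc d} {lam Δ s η : ℝ}
    (hγ : ContinuousOn γ (Icc s 1)) (hlam : 0 < lam) (hΔ : 0 ≤ Δ) (hη : 0 < η) :
    ∃ c, nearEdgeEnds γ lam Δ s ⊆ closedBall c (4 * Δ + η) := by
  set T := {t ∈ Icc s 1 | ∃ p q, dist p q = lam ∧ IsNearEdge γ s t Δ p q}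
  rcases T.eq_empty_or_nonempty with hT | hT
  · refine ⟨0, fun q ⟨p, t, ht, hpq, hnear⟩ => ?_⟩
    exact (eq_empty_iff_forall_notMem.1 hT t ⟨ht, p, q, hpq, hnear⟩).elim
  have hbdd : BddAbove T := ⟨1, fun t ht => ht.1.2⟩
  have hsup : sSup T ∈ Icc s 1 :=
    ⟨hT.some_mem.1.1.trans (le_csSup hbdd hT.some_mem), csSup_le hT fun t ht => ht.1.2⟩
  obtain ⟨t₀, ⟨-, p₀, q₀, hpq₀, hnear₀⟩, htail⟩ :=
    exists_mem_forall_ge_dist_le hT hbdd (fun t ht => ht.1) (hγ _ hsup) hη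
  refine ⟨seg p₀ q₀ (1 - 2 * Δ / lam), fun q ⟨p, t, ht, hpq, hnear⟩ => ?_⟩
  rw [mem_closedBall]
  rcases le_or_gt t t₀ with hle | hlt
  · obtain ⟨v, hv, hx⟩ := hnear₀.exists_near t ⟨ht.1, hle⟩
    have hqx : dist q (seg p₀ q₀ v) ≤ 2 * Δ := by
      linarith [dist_triangle q (γ t) (seg p₀ q₀ v), dist_comm q (γ t), hnear.dist_end]
    linarith [dist_seg_le_four_mul hlam hpq hpq₀ hnear.dist_start hnear₀.dist_start hv hqx]
  · have hmove := htail t ⟨ht, p, q, hpq, hnear⟩ hlt.le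
    have hq₀c : dist q₀ (seg p₀ q₀ (1 - 2 * Δ / lam)) = 2 * Δ := by
      have h := dist_seg_seg p₀ q₀ 1 (1 - 2 * Δ / lam)
      rwa [seg_one, sub_sub_cancel, abs_of_nonneg (by positivity), hpq₀,
        div_mul_cancel₀ _ hlam.ne'] at h
    linarith [dist_triangle4 q (γ t) (γ t₀) q₀, dist_triangle q q₀ (seg p₀ q₀ (1 - 2 * Δ / lam)),
      dist_comm q (γ t), hnear.dist_end, hnear₀.dist_end]

section CurveMap

variable {d n : ℕ} (P : Fin (n + 1) → Euc d)

lemma curveMap_eq_of_mem_Icc (hn : n ≠ 0) {k : ℕ} (hk : k < n) {t : ℝ}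
    (ht : t ∈ Icc ((k : ℝ) / n) ((k + 1) / n)) :
    curveMap P t = (1 - (t * n - k)) • P ⟨k, by omega⟩ + (t * n - k) • P ⟨k + 1, by omega⟩ := by
  have hn' : (0 : ℝ) < n := Nat.cast_pos.2 (Nat.pos_of_ne_zero hn)
  have hlo : (k : ℝ) ≤ t * n := (div_le_iff₀ hn').1 ht.1
  have hhi : t * n ≤ k + 1 := (le_div_iff₀ hn').1 ht.2
  rw [curveMap, dif_neg hn]
  rcases hhi.lt_or_eq with hhi | hhi
  · have hfloor : ⌊t * (n : ℝ)⌋₊ = k :=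
      (Nat.floor_eq_iff ((Nat.cast_nonneg k).trans hlo)).2 ⟨hlo, hhi⟩
    simp only [hfloor, show min k (n - 1) = k by omega]
  · -- at a breakpoint `⌊t n⌋₊ = k + 1`, and both neighbouring pieces evaluate to `P (k + 1)`
    have hfloor : ⌊t * (n : ℝ)⌋₊ = k + 1 := by rw [hhi]; exact_mod_cast Nat.floor_natCast (k + 1)
    rcases Nat.lt_or_ge (k + 1) n with hk1 | hk1
    · simp only [hfloor, show min (k + 1) (n - 1) = k + 1 by omega]
      push_cast
      simp [hhi]
    · simp only [hfloor, show min (k + 1) (n - 1) = k by omega]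

lemma curveMap_continuousOn : ContinuousOn (curveMap P) (Icc 0 1) := by
  rcases eq_or_ne n 0 with hn | hn
  · exact continuousOn_const.congr fun t _ => by rw [curveMap, dif_pos hn]
  have hn' : (0 : ℝ) < n := Nat.cast_pos.2 (Nat.pos_of_ne_zero hn)
  have hpieces : ∀ k ≤ n, ContinuousOn (curveMap P) (Icc 0 ((k : ℝ) / n)) := by
    intro k
    induction k with
    | zero => simp
    | succ k ih =>
      intro hk
      have hpiece : ContinuousOn (curveMap P) (Icc ((k : ℝ) / n) ((k + 1) / n)) := by
        refine ContinuousOn.congr ?_ fun t ht => curveMap_eq_of_mem_Icc P hn (by omega) ht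
        fun_prop
      have hunion : Icc 0 ((k : ℝ) / n) ∪ Icc ((k : ℝ) / n) ((k + 1) / n) = Icc 0 (((k : ℝ) + 1) / n) :=
        Icc_union_Icc_eq_Icc (by positivity) (by gcongr; linarith)
      push_cast
      exact hunion ▸ (ih (by omega)).union_of_isClosed hpiece isClosed_Icc isClosed_Icc
  simpa [div_self hn'.ne'] using hpieces n le_rfl

end CurveMap

lemma locusStart_subset_nearEdgeEnds {d n : ℕ} (P : Fin (n + 1) → Euc d) (lam Δ : ℝ) {s : ℝ}
    (hs : 0 ≤ s) : locusStart P lam Δ s ⊆ nearEdgeEnds (curveMap P) lam Δ s := by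
  rintro q ⟨p, t, ht, hpq, hF⟩
  exact ⟨p, t, ht, hpq, isNearEdge_of_frechetDist_le
    ((curveMap_continuousOn P).mono (Icc_subset_Icc hs ht.2)) ht.1 hF⟩

lemma exists_subset_closedBall_zero_of_forall_pos {α : Type*} [PseudoMetricSpace α] {S : Set α}
    (h : ∀ η > 0, ∃ c, S ⊆ closedBall c η) : ∃ c, S ⊆ closedBall c 0 := by
  rcases S.eq_empty_or_nonempty with rfl | ⟨x, hx⟩
  · exact ⟨(h 1 one_pos).choose, empty_subset _⟩
  refine ⟨x, fun y hy => mem_closedBall.2 (le_of_forall_pos_le_add fun ε hε => ?_)⟩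
  obtain ⟨c, hc⟩ := h (ε / 2) (half_pos hε)
  linarith [dist_triangle_right y x c, mem_closedBall.1 (hc hy), mem_closedBall.1 (hc hx)]

theorem locusStart_subset_ball_general (d n : ℕ) (P : Fin (n + 1) → Euc d) (lam Δ s : ℝ)
    (hΔ : 0 ≤ Δ) (hs : s ∈ Icc (0 : ℝ) 1) :
    ∃ pstar : Euc d, locusStart P lam Δ s ⊆ closedBall pstar (5 * Δ) := by
  have hsub := locusStart_subset_nearEdgeEnds P lam Δ hs.1
  have hγ : ContinuousOn (curveMap P) (Icc s 1) :=
    (curveMap_continuousOn P).mono (Icc_subset_Icc_left hs.1)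
  rcases le_or_gt lam (4 * Δ) with hshort | hlong
  · exact ⟨curveMap P s, hsub.trans <| (nearEdgeEnds_subset_closedBall_start lam Δ s).trans
      (closedBall_subset_closedBall (by linarith))⟩
  have hlam : 0 < lam := by linarith
  rcases hΔ.eq_or_lt with rfl | hΔpos
  · rw [mul_zero]
    refine exists_subset_closedBall_zero_of_forall_pos fun η hη => ?_
    obtain ⟨c, hc⟩ := exists_nearEdgeEnds_subset_closedBall hγ hlam le_rfl hη
    exact ⟨c, hsub.trans (by simpa using hc)⟩
  · obtain ⟨c, hc⟩ := exists_nearEdgeEnds_subset_closedBall hγ hlam hΔ hΔpos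
    exact ⟨c, hsub.trans (hc.trans (closedBall_subset_closedBall (by linarith)))⟩

/-- Lemma 3.7 of the paper. For every polygonal curve `P`, `λ ≥ 0`,
`Δ ≥ 0` and `s ∈ [0,1]`, the set `L_{λ,Δ}(P,s)` is contained in a single closed ball of
radius `5Δ`. -/
theorem locusStart_subset_ball (d n : ℕ) (P : Fin (n + 1) → Euc d) (lam Δ s : ℝ)
    (hlam : 0 ≤ lam) (hΔ : 0 ≤ Δ) (hs : s ∈ Icc (0 : ℝ) 1) :
    ∃ pstar : Euc d, locusStart P lam Δ s ⊆ closedBall pstar (5 * Δ) :=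
  locusStart_subset_ball_general d n P lam Δ s hΔ hs
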